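/- Let Ξ be a minimal and aperiodic right-infinite subshift over a finite alphabet with language ℒ. If Ξ is right-special balanced, then for every choice function τ the set of edges { (τ(v₁), τ(v₂)) : (v₁,v₂) ∈ H⁽¹⁾ } equals the set of edges { (τ(u₁), τ(u₂)) : (u₁,u₂) ∈ H̃⁽¹⁾ }, i.e. the approximation graphs Γ_τ and Γ̃_τ coincide. -/

import Mathlib

open scoped ENNReal Classical

noncomputable section

namespace Arx1111

variable {A : Type*}

/-! ### Words and infinite words -/

/-- The left shift on right-infinite words. -/
def shift (ξ : ℕ → A) : ℕ → A := fun n => ξ (n + 1)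

/-- The finite word `u` occurs in the infinite word `ξ` at position `k`. -/
def FactorAt (u : List A) (ξ : ℕ → A) (k : ℕ) : Prop :=
  u = (List.range u.length).map fun i => ξ (k + i)

/-- `u` is a factor of the infinite word `ξ`. -/
def IsFactorOf (u : List A) (ξ : ℕ → A) : Prop := ∃ k, FactorAt u ξ k

/-- `u` is a prefix of the infinite word `ξ`. -/
def PrefixOfInf (u : List A) (ξ : ℕ → A) : Prop := FactorAt u ξ 0

/-- `u` is a proper prefix of `v`. -/
def PPrefix (u v : List A) : Prop := u <+: v ∧ u ≠ v

/-- The `n`-th power `u^n` of a finite word `u`. -/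
def wordPow (u : List A) : ℕ → List A
  | 0 => []
  | n + 1 => u ++ wordPow u n

/-- The language of a set of infinite words: all finite factors of its elements. -/
def language (Ξ : Set (ℕ → A)) : Set (List A) := {u | ∃ ξ ∈ Ξ, IsFactorOf u ξ}

/-! ### Subshifts -/

/-- `Ξ` is a (right-infinite) subshift: nonempty, closed, shift-invariant. -/
structure IsSubshift [TopologicalSpace A] (Ξ : Set (ℕ → A)) : Prop where
  nonempty : Ξ.Nonempty
  isClosed : IsClosed Ξ
  shift_mem : ∀ ξ ∈ Ξ, shift ξ ∈ Ξ

/-- Minimality: every orbit is dense in `Ξ`. -/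
def IsMinimal [TopologicalSpace A] (Ξ : Set (ℕ → A)) : Prop :=
  ∀ ξ ∈ Ξ, Ξ ⊆ closure (Set.range fun n => shift^[n] ξ)

/-- Aperiodicity. -/
def Aperiodic (Ξ : Set (ℕ → A)) : Prop :=
  ∀ ξ ∈ Ξ, ∀ n : ℕ, shift^[n] ξ = ξ → n = 0

/-! ### Occurrences, complete first returns, privileged words -/

variable [DecidableEq A]

/-- The number of occurrences of `u` as a factor of `w`. -/
def occCount (u w : List A) : ℕ :=
  ((List.range (w.length + 1)).filter fun k => (w.drop k).take u.length == u).length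

/-- `u'` is a complete first return to `u`: if `u` is empty, `u'` is a single letter;
otherwise `u` is a prefix and a suffix of `u'` and occurs exactly twice in `u'`. -/
def IsCFR (u u' : List A) : Prop :=
  if u = [] then u'.length = 1
  else u <+: u' ∧ u <:+ u' ∧ occCount u u' = 2

/-- Privileged words of order `n`. -/
inductive PrivOrder : ℕ → List A → Prop where
  | zero : PrivOrder 0 []
  | succ {n : ℕ} {u u' : List A} : PrivOrder n u → IsCFR u u' → PrivOrder (n + 1) u'

/-- A word is privileged if it is privileged of some order. -/
def IsPrivileged (u : List A) : Prop := ∃ n, PrivOrder n u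

/-- `u'` is a complete first return to `u` inside the language `L`. -/
def CFRin (L : Set (List A)) (u u' : List A) : Prop := u' ∈ L ∧ IsCFR u u'

/-- `u` is right-special for the language `L`. -/
def RightSpecial (L : Set (List A)) (u : List A) : Prop :=
  u ∈ L ∧ ∃ a b : A, a ≠ b ∧ u ++ [a] ∈ L ∧ u ++ [b] ∈ L

/-- `a(v)`: number of one-letter right extensions of `v` in `L`, minus one. -/
def aext (L : Set (List A)) (v : List A) : ℕ := Nat.card {a : A // v ++ [a] ∈ L} - 1

/-- `ã(v)`: number of complete first returns to `v` in `L`, minus one, if `v` is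
privileged, and `0` otherwise. -/
def atil (L : Set (List A)) (v : List A) : ℕ :=
  if IsPrivileged v then Nat.card {u' : List A // CFRin L v u'} - 1 else 0

/-- `S(u)`: right-special words `r` with `u ⪯ r ≺ u'` for some complete first return `u'`. -/
def Sset (L : Set (List A)) (u : List A) : Set (List A) :=
  {r | RightSpecial L r ∧ ∃ u', CFRin L u u' ∧ u <+: r ∧ PPrefix r u'}

/-- Right-special balanced: between a privileged word and any of its complete first
returns there is exactly one right-special word. -/
def RSBalanced (L : Set (List A)) : Prop :=
  ∀ u, IsPrivileged u → u ∈ L → ∀ u', CFRin L u u' →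
    ∃! r, RightSpecial L r ∧ u <+: r ∧ PPrefix r u'

/-- `r'` is the shortest right-special word having `r` as a proper prefix. -/
def IsShortestRSExt (L : Set (List A)) (r r' : List A) : Prop :=
  RightSpecial L r' ∧ PPrefix r r' ∧
    ∀ r'', RightSpecial L r'' → PPrefix r r'' → r'.length ≤ r''.length

/-- `r = φ⁽⁰⁾(u)`: `r` is the shortest right-special word having `u` as a prefix. -/
def IsPhi0 (L : Set (List A)) (u r : List A) : Prop :=
  RightSpecial L r ∧ u <+: r ∧ ∀ r', RightSpecial L r' → u <+: r' → r.length ≤ r'.length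

/-- `H⁽¹⁾`: pairs of distinct one-letter right extensions of a common word. -/
def H1 (L : Set (List A)) (v₁ v₂ : List A) : Prop :=
  v₁ ∈ L ∧ v₂ ∈ L ∧ v₁ ≠ v₂ ∧ ∃ (w : List A) (a b : A), v₁ = w ++ [a] ∧ v₂ = w ++ [b]

/-- `H̃⁽¹⁾`: pairs of distinct complete first returns to a common privileged word. -/
def TildeH1 (L : Set (List A)) (u₁ u₂ : List A) : Prop :=
  u₁ ≠ u₂ ∧ ∃ u, IsPrivileged u ∧ CFRin L u u₁ ∧ CFRin L u u₂

/-- Length of the longest common prefix of two finite words. -/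
def lcpLenW (u v : List A) : ℕ := sSup {n | n ≤ u.length ∧ u.take n = v.take n}

/-- Length of the longest common privileged prefix of two finite words. -/
def weeLenW (u v : List A) : ℕ :=
  sSup {n | ∃ w : List A, IsPrivileged w ∧ w.length = n ∧ w <+: u ∧ w <+: v}

/-- `φ⁽¹⁾`: the pair of one-letter extensions of `u₁ ∧ u₂` which are prefixes of
`u₁` resp. `u₂`. -/
def phi1 (u₁ u₂ : List A) : List A × List A :=
  (u₁.take (lcpLenW u₁ u₂ + 1), u₂.take (lcpLenW u₁ u₂ + 1))

/-! ### Bounded powers and repulsiveness -/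

/-- Bounded powers: there is `p` such that no `(p+1)`-th power of a nonempty word
belongs to `L`. -/
def BoundedPowers (L : Set (List A)) : Prop :=
  ∃ p : ℕ, ∀ u ∈ L, u ≠ [] → wordPow u (p + 1) ∉ L

/-- The set of ratios `(|W|-|w|)/|w|` over words `w, W ∈ L` with `w` a nonempty proper
prefix and a suffix of `W`. -/
def repulsionSet (L : Set (List A)) : Set ℝ :=
  {x | ∃ w W : List A, w ∈ L ∧ W ∈ L ∧ w ≠ [] ∧ PPrefix w W ∧ w <:+ W ∧
        x = ((W.length : ℝ) - (w.length : ℝ)) / (w.length : ℝ)}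

/-- The index of repulsiveness `ℓ`. -/
def repulsionIndex (L : Set (List A)) : ℝ := sInf (repulsionSet L)

/-- Repulsive: `ℓ > 0`. -/
def Repulsive (L : Set (List A)) : Prop := 0 < repulsionIndex L

/-! ### Privileged prefixes of infinite words -/

/-- The `n`-th privileged prefix `ξ̃ₙ` of an infinite word `ξ`. -/
def privPrefix (ξ : ℕ → A) : ℕ → List A
  | 0 => []
  | n + 1 =>
    if h : ∃ u', IsCFR (privPrefix ξ n) u' ∧ PrefixOfInf u' ξ then h.choose
    else privPrefix ξ n

/-- The order `ind(ξ ⩏ η)` of the longest common privileged prefix of two infinite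
words; the word `ξ ⩏ η` itself is `privPrefix ξ (weeInd ξ η)`. -/
def weeInd (ξ η : ℕ → A) : ℕ := sSup {n | privPrefix ξ n = privPrefix η n}

/-- Length of the longest common prefix `ξ ∧ η` of two distinct infinite words. -/
def lcpLenInf (ξ η : ℕ → A) : ℕ := sInf {n | ξ n ≠ η n}

/-! ### Choice functions, weight functions and the metrics -/

/-- A choice function for `Ξ`. -/
def IsChoiceFun (Ξ : Set (ℕ → A)) (τ : List A → ℕ → A) : Prop :=
  (∀ v ∈ language Ξ, τ v ∈ Ξ ∧ PrefixOfInf v (τ v)) ∧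
  (∀ v ∈ language Ξ, ∀ w ∈ language Ξ, v.length < w.length →
    PrefixOfInf w (τ v) → τ w = τ v)

/-- A weight function. -/
structure IsWeight (δ : ℕ → ℝ) : Prop where
  pos : ∀ n, 0 < δ n
  strictAnti : StrictAnti δ
  tendsto_zero : Filter.Tendsto δ Filter.atTop (nhds 0)
  submul : ∃ c : ℝ, 0 < c ∧ ∀ a b : ℕ, δ (a * b) ≤ c * δ a * δ b
  doubling : ∃ c : ℝ, 0 < c ∧ ∀ a : ℕ, c * δ a ≤ δ (2 * a)

variable [TopologicalSpace A]

/-- The metric `d_τ` associated to the right-special horizontal edges. -/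
def dTau (Ξ : Set (ℕ → A)) (δ : ℕ → ℝ) (τ : List A → ℕ → A) (ξ η : ℕ → A) : ℝ≥0∞ :=
  ⨆ f : {f : (ℕ → A) → ℝ // ContinuousOn f Ξ ∧
      ∀ v₁ v₂, H1 (language Ξ) v₁ v₂ → |f (τ v₁) - f (τ v₂)| ≤ δ (lcpLenW v₁ v₂)},
    ENNReal.ofReal |f.1 ξ - f.1 η|

/-- The metric `d̃_τ` associated to the privileged horizontal edges. -/
def dTilTau (Ξ : Set (ℕ → A)) (δ : ℕ → ℝ) (τ : List A → ℕ → A) (ξ η : ℕ → A) : ℝ≥0∞ :=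
  ⨆ f : {f : (ℕ → A) → ℝ // ContinuousOn f Ξ ∧
      ∀ u₁ u₂, TildeH1 (language Ξ) u₁ u₂ → |f (τ u₁) - f (τ u₂)| ≤ δ (weeLenW u₁ u₂)},
    ENNReal.ofReal |f.1 ξ - f.1 η|

/-- `d_inf`. -/
def dInf (Ξ : Set (ℕ → A)) (δ : ℕ → ℝ) (ξ η : ℕ → A) : ℝ≥0∞ :=
  ⨅ τ : {τ // IsChoiceFun Ξ τ}, dTau Ξ δ τ.1 ξ η

/-- `d_sup`. -/
def dSup (Ξ : Set (ℕ → A)) (δ : ℕ → ℝ) (ξ η : ℕ → A) : ℝ≥0∞ :=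
  ⨆ τ : {τ // IsChoiceFun Ξ τ}, dTau Ξ δ τ.1 ξ η

/-- `d̃_inf`. -/
def dTilInf (Ξ : Set (ℕ → A)) (δ : ℕ → ℝ) (ξ η : ℕ → A) : ℝ≥0∞ :=
  ⨅ τ : {τ // IsChoiceFun Ξ τ}, dTilTau Ξ δ τ.1 ξ η

/-- `d̃_sup`. -/
def dTilSup (Ξ : Set (ℕ → A)) (δ : ℕ → ℝ) (ξ η : ℕ → A) : ℝ≥0∞ :=
  ⨆ τ : {τ // IsChoiceFun Ξ τ}, dTilTau Ξ δ τ.1 ξ η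

/-- `β̃_τ(ξ̃ₙ)`: equals `1` if the longest common privileged prefix of `τ(ξ̃ₙ)` and `ξ`
is `ξ̃ₙ`, and `0` otherwise. -/
def btil (τ : List A → ℕ → A) (ξ : ℕ → A) (n : ℕ) : ℝ≥0∞ :=
  if privPrefix (τ (privPrefix ξ n)) (weeInd (τ (privPrefix ξ n)) ξ) = privPrefix ξ n
  then 1 else 0

/-! ### Zeta functions -/

/-- `ζ_k(s)` (with the convention `0⁰ = 0`). -/
def zeta (L : Set (List A)) (δ : ℕ → ℝ) (k : ℕ) (s : ℝ) : ℝ≥0∞ :=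
  ∑' v : L, (if aext L (v : List A) = 0 then 0 else ((aext L (v : List A) : ℝ≥0∞)) ^ k) *
    ENNReal.ofReal (δ (v : List A).length ^ s)

/-- `ζ̃_k(s)` (with the convention `0⁰ = 0`). -/
def zetaTil (L : Set (List A)) (δ : ℕ → ℝ) (k : ℕ) (s : ℝ) : ℝ≥0∞ :=
  ∑' v : L, (if atil L (v : List A) = 0 then 0 else ((atil L (v : List A) : ℝ≥0∞)) ^ k) *
    ENNReal.ofReal (δ (v : List A).length ^ s)

/-- Almost finite privileged rank. -/
def AlmostFiniteRank (L : Set (List A)) : Prop :=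
  ∃ a b : ℝ, 0 < a ∧ 0 < b ∧ ∀ u, IsPrivileged u → u ∈ L → 2 ≤ u.length →
    (Nat.card {u' : List A // CFRin L u u'} : ℝ) ≤ a * (Real.log u.length) ^ b

/-!
An edge of `Γ_τ` comes from two one-letter extensions `w a`, `w b`. Let `u` be the longest
privileged prefix of `w`. By minimality `u` recurs in `τ (w a)`, and the complete first return
to `u` read off `τ (w a)` is privileged, hence longer than `w`: it extends `w a`, so `τ` agrees
on the two words. Doing the same with `w b` gives an edge of `Γ̃_τ`.

Conversely, two distinct complete first returns `u₁`, `u₂` to `u` are not prefixes of each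
other, so they fork as `c a ⪯ u₁`, `c b ⪯ u₂` with `u ⪯ c` right-special. By right-special
balance `c` is the only right-special word between `u` and `uᵢ`, so `τ (c a)` cannot leave `u₁`
before its end and `τ (u₁) = τ (c a)`; likewise `τ (u₂) = τ (c b)`.
-/

section

variable {α : Type*}

def segment (ξ : ℕ → α) (k n : ℕ) : List α := (List.range n).map fun i => ξ (k + i)

@[simp] lemma length_segment (ξ : ℕ → α) (k n : ℕ) : (segment ξ k n).length = n := by
  simp [segment]

lemma segment_add (ξ : ℕ → α) (k m n : ℕ) :
    segment ξ k (m + n) = segment ξ k m ++ segment ξ (k + m) n := by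
  simp [segment, List.range_add, Nat.add_assoc]

lemma factorAt_iff_eq_segment {u : List α} {ξ : ℕ → α} {k : ℕ} :
    FactorAt u ξ k ↔ u = segment ξ k u.length := Iff.rfl

lemma factorAt_segment (ξ : ℕ → α) (k n : ℕ) : FactorAt (segment ξ k n) ξ k := by
  rw [factorAt_iff_eq_segment, length_segment]

lemma take_segment (ξ : ℕ → α) (k : ℕ) {m n : ℕ} (h : m ≤ n) :
    (segment ξ k n).take m = segment ξ k m := by
  rw [← Nat.add_sub_cancel' h, segment_add, List.take_left' (length_segment ..)]

lemma prefix_segment_iff {u : List α} {ξ : ℕ → α} {k n : ℕ} :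
    u <+: segment ξ k n ↔ u.length ≤ n ∧ FactorAt u ξ k := by
  constructor
  · intro h
    have hlen : u.length ≤ n := by simpa using h.length_le
    have hu := List.prefix_iff_eq_take.1 h
    rw [take_segment ξ k hlen] at hu
    exact ⟨hlen, hu⟩
  · rintro ⟨hlen, hu⟩
    rw [hu, ← Nat.add_sub_cancel' hlen, segment_add]
    exact List.prefix_append _ _

lemma drop_segment (ξ : ℕ → α) (k m n : ℕ) :
    (segment ξ k n).drop m = segment ξ (k + m) (n - m) := by
  rcases le_total m n with h | h
  · rw [← Nat.add_sub_cancel' h, segment_add, List.drop_left' (length_segment ..),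
      Nat.add_sub_cancel_left]
  · rw [List.drop_of_length_le (by simpa using h), Nat.sub_eq_zero_of_le h]
    rfl

lemma FactorAt.of_prefix {u v : List α} {ξ : ℕ → α} {k : ℕ} (h : u <+: v)
    (hv : FactorAt v ξ k) : FactorAt u ξ k := by
  rw [factorAt_iff_eq_segment] at hv
  rw [hv] at h
  exact (prefix_segment_iff.1 h).2

lemma PrefixOfInf.of_prefix {u v : List α} {ξ : ℕ → α} (h : u <+: v)
    (hv : PrefixOfInf v ξ) : PrefixOfInf u ξ :=
  FactorAt.of_prefix h hv

lemma PrefixOfInf.prefix_of_length_le {u v : List α} {ξ : ℕ → α} (hu : PrefixOfInf u ξ)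
    (hv : PrefixOfInf v ξ) (h : u.length ≤ v.length) : u <+: v := by
  rw [factorAt_iff_eq_segment.1 hv]
  exact prefix_segment_iff.2 ⟨h, hu⟩

lemma segment_mem_language {Ξ : Set (ℕ → α)} {ξ : ℕ → α} (hξ : ξ ∈ Ξ) (k n : ℕ) :
    segment ξ k n ∈ language Ξ :=
  ⟨ξ, hξ, k, factorAt_segment ξ k n⟩

lemma mem_language_of_prefix {Ξ : Set (ℕ → α)} {u v : List α} (h : u <+: v)
    (hv : v ∈ language Ξ) : u ∈ language Ξ := by
  obtain ⟨ξ, hξ, k, hk⟩ := hv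
  exact ⟨ξ, hξ, k, hk.of_prefix h⟩

lemma shift_iterate_apply (ξ : ℕ → α) (n i : ℕ) : shift^[n] ξ i = ξ (n + i) := by
  induction n generalizing ξ with
  | zero => simp
  | succ n ih =>
    rw [Function.iterate_succ_apply, ih]
    simp only [shift, Nat.add_right_comm]

lemma exists_pos_factorAt [TopologicalSpace α] [DiscreteTopology α] {Ξ : Set (ℕ → α)}
    (hΞ : IsSubshift Ξ) (hmin : IsMinimal Ξ) {u : List α} (hu : u ∈ language Ξ)
    {ξ : ℕ → α} (hξ : ξ ∈ Ξ) : ∃ k, 0 < k ∧ FactorAt u ξ k := by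
  obtain ⟨η, hη, j, hj⟩ := hu
  let cylinder := (Set.Iio (j + u.length)).pi fun i => ({η i} : Set α)
  have hopen : IsOpen cylinder :=
    isOpen_set_pi (Set.finite_Iio _) fun i _ => isOpen_discrete _
  obtain ⟨_, hcyl, n, rfl⟩ := mem_closure_iff.1 (hmin _ (hΞ.shift_mem ξ hξ) hη) cylinder hopen
    fun i _ => rfl
  refine ⟨n + 1 + j, by omega, factorAt_iff_eq_segment.2 ?_⟩
  rw [hj]
  refine List.ext_getElem (by simp [segment]) fun i hi _ => ?_
  have hi : i < u.length := by simpa [segment] using hi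
  have := hcyl (j + i) (by simp; omega)
  simp only [Set.mem_singleton_iff, shift_iterate_apply, shift] at this
  simp [segment, ← this, Nat.add_assoc, Nat.add_comm 1, Nat.add_left_comm]

lemma exists_fork_of_not_prefix {u₁ u₂ : List α} (h₁ : ¬u₁ <+: u₂) (h₂ : ¬u₂ <+: u₁) :
    ∃ c a b, a ≠ b ∧ c ++ [a] <+: u₁ ∧ c ++ [b] <+: u₂ := by
  induction u₁ generalizing u₂ with
  | nil => exact absurd (List.nil_prefix) h₁
  | cons x t ih =>
    cases u₂ with
    | nil => exact absurd (List.nil_prefix) h₂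
    | cons y s =>
      by_cases hxy : x = y
      · subst hxy
        obtain ⟨c, a, b, hab, ha, hb⟩ :=
          ih (fun h => h₁ (List.cons_prefix_cons.2 ⟨rfl, h⟩))
            (fun h => h₂ (List.cons_prefix_cons.2 ⟨rfl, h⟩))
        exact ⟨x :: c, a, b, hab, List.cons_prefix_cons.2 ⟨rfl, ha⟩,
          List.cons_prefix_cons.2 ⟨rfl, hb⟩⟩
      · exact ⟨[], x, y, hxy, by simp, by simp⟩

lemma prefix_of_prefix_fork {z c x y : List α} {a b : α} (hab : a ≠ b)
    (hx : c ++ [a] <+: x) (hy : c ++ [b] <+: y) (hzx : z <+: x) (hzy : z <+: y) :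
    z <+: c := by
  rcases le_or_gt z.length c.length with h | h
  · exact List.prefix_of_prefix_length_le hzx ((List.prefix_append c [a]).trans hx) h
  · have ha := List.prefix_of_prefix_length_le hx hzx (by simp; omega)
    have hb := List.prefix_of_prefix_length_le hy hzy (by simp; omega)
    exact absurd (List.prefix_of_prefix_length_le ha hb (by simp)) (by simpa using hab)

lemma IsChoiceFun.eq_of_prefixOfInf {Ξ : Set (ℕ → α)} {τ : List α → ℕ → α}
    (hτ : IsChoiceFun Ξ τ) {v w : List α} (hv : v ∈ language Ξ) (hw : w ∈ language Ξ)
    (hvw : v <+: w) (hwτ : PrefixOfInf w (τ v)) : τ w = τ v := by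
  rcases hvw.length_le.eq_or_lt with hlen | hlt
  · rw [hvw.eq_of_length hlen]
  · exact hτ.2 v hv w hw hlt hwτ

lemma prefixOfInf_of_forall_not_rightSpecial {Ξ : Set (ℕ → α)} {ξ : ℕ → α} (hξ : ξ ∈ Ξ)
    {v u' : List α} (hvu' : v <+: u') (hu' : u' ∈ language Ξ) (hvξ : PrefixOfInf v ξ)
    (hrs : ∀ p, RightSpecial (language Ξ) p → v <+: p → ¬PPrefix p u') :
    PrefixOfInf u' ξ := by
  set s := segment ξ 0 u'.length
  have hvs : v <+: s := prefix_segment_iff.2 ⟨hvu'.length_le, hvξ⟩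
  by_cases hu's : u' <+: s
  · exact prefix_segment_iff.1 hu's |>.2
  have hsu' : ¬s <+: u' := fun h => hu's (by rw [h.eq_of_length (length_segment ..)])
  obtain ⟨c, a, b, hab, ha, hb⟩ := exists_fork_of_not_prefix hu's hsu'
  have hcL := mem_language_of_prefix ((List.prefix_append c [a]).trans ha) hu'
  refine (hrs c ⟨hcL, a, b, hab, mem_language_of_prefix ha hu',
    mem_language_of_prefix hb (segment_mem_language hξ 0 _)⟩
    (prefix_of_prefix_fork hab ha hb hvu' hvs) ⟨(List.prefix_append c [a]).trans ha, ?_⟩).elim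
  rintro rfl
  simpa using ha.length_le

variable [DecidableEq α]

lemma occCount_eq_card (u w : List α) :
    occCount u w = ((Finset.range (w.length + 1)).filter fun k => u <+: w.drop k).card := by
  simp only [occCount, Finset.card, Finset.filter_val, Finset.range_val, Multiset.range,
    Multiset.filter_coe, Multiset.coe_card, List.prefix_iff_eq_take, eq_comm (a := u),
    Bool.beq_eq_decide_eq]

lemma isPrivileged_nil : IsPrivileged ([] : List α) := ⟨0, .zero⟩

lemma IsPrivileged.of_isCFR {u u' : List α} (hu : IsPrivileged u) (h : IsCFR u u') :
    IsPrivileged u' :=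
  let ⟨n, hn⟩ := hu; ⟨n + 1, .succ hn h⟩

lemma IsCFR.prefix {u u' : List α} (h : IsCFR u u') : u <+: u' := by
  by_cases hu : u = []
  · simp [hu]
  · simp only [IsCFR, if_neg hu] at h
    exact h.1

lemma occCount_self {u : List α} (hu : u ≠ []) : occCount u u = 1 := by
  rw [occCount_eq_card, Finset.card_eq_one]
  refine ⟨0, Finset.eq_singleton_iff_unique_mem.2 ⟨by simp, fun j hj => ?_⟩⟩
  have hlen := (Finset.mem_filter.1 hj).2.length_le
  have hpos := List.length_pos_iff.2 hu
  simp only [List.length_drop] at hlen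
  omega

lemma IsCFR.length_lt {u u' : List α} (h : IsCFR u u') : u.length < u'.length := by
  by_cases hu : u = []
  · simp only [IsCFR, if_pos hu] at h
    simp [hu, h]
  · refine lt_of_le_of_ne h.prefix.length_le fun hlen => ?_
    simp only [IsCFR, if_neg hu, ← h.prefix.eq_of_length hlen, occCount_self hu] at h
    omega

/-- Three distinct occurrences of `u` in `u₂` would be found at `0`, `|u₁| - |u|` and
`|u₂| - |u|`. -/
lemma IsCFR.not_prefix {u u₁ u₂ : List α} (h₁ : IsCFR u u₁) (h₂ : IsCFR u u₂)
    (hne : u₁ ≠ u₂) : ¬u₁ <+: u₂ := by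
  intro h
  have hlt₁ := h₁.length_lt
  have hlt₂ : u₁.length < u₂.length :=
    lt_of_le_of_ne h.length_le fun hlen => hne (h.eq_of_length hlen)
  by_cases hu : u = []
  · simp only [IsCFR, if_pos hu] at h₁ h₂
    omega
  simp only [IsCFR, if_neg hu] at h₁ h₂
  obtain ⟨hpre₂, hsuf₂, hocc₂⟩ := h₂
  have hocc₁ : u <+: u₂.drop (u₁.length - u.length) := by
    simpa only [← List.suffix_iff_eq_drop.1 h₁.2.1] using h.drop (u₁.length - u.length)
  have hsub : ({0, u₁.length - u.length, u₂.length - u.length} : Finset ℕ) ⊆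
      (Finset.range (u₂.length + 1)).filter fun k => u <+: u₂.drop k := by
    intro j hj
    simp only [Finset.mem_insert, Finset.mem_singleton] at hj
    rcases hj with rfl | rfl | rfl <;>
      refine Finset.mem_filter.2 ⟨Finset.mem_range.2 (by omega), ?_⟩
    · simpa using hpre₂
    · exact hocc₁
    · rw [← List.suffix_iff_eq_drop.1 hsuf₂]
  have hcard := Finset.card_le_card hsub
  rw [← occCount_eq_card, hocc₂, Finset.card_insert_of_notMem (by simp; omega),
    Finset.card_insert_of_notMem (by simp; omega), Finset.card_singleton] at hcard
  omega

lemma isCFR_segment_of_first_return {ξ : ℕ → α} {u : List α} (hu : u ≠ [])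
    (h₀ : PrefixOfInf u ξ) {k : ℕ} (hk : 0 < k) (hkfac : FactorAt u ξ k)
    (hfirst : ∀ j, 0 < j → j < k → ¬FactorAt u ξ j) :
    IsCFR u (segment ξ 0 (k + u.length)) := by
  simp only [IsCFR, if_neg hu]
  refine ⟨prefix_segment_iff.2 ⟨by omega, h₀⟩, ?_, ?_⟩
  · rw [segment_add, Nat.zero_add, ← factorAt_iff_eq_segment.1 hkfac]
    exact List.suffix_append _ _
  · rw [occCount_eq_card, Finset.card_eq_two]
    refine ⟨0, k, hk.ne, Finset.ext fun j => ?_⟩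
    simp only [Finset.mem_filter, Finset.mem_range, length_segment, drop_segment,
      prefix_segment_iff, Nat.zero_add, Finset.mem_insert, Finset.mem_singleton]
    constructor
    · rintro ⟨hj, hlen, hfac⟩
      by_contra hne
      exact hfirst j (by omega) (by omega) hfac
    · rintro (rfl | rfl)
      · exact ⟨by omega, by omega, h₀⟩
      · exact ⟨by omega, by omega, hkfac⟩

lemma exists_isCFR_prefixOfInf [TopologicalSpace α] [DiscreteTopology α]
    {Ξ : Set (ℕ → α)} (hΞ : IsSubshift Ξ) (hmin : IsMinimal Ξ) {ξ : ℕ → α} (hξ : ξ ∈ Ξ)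
    {u : List α} (hu : PrefixOfInf u ξ) : ∃ u', IsCFR u u' ∧ PrefixOfInf u' ξ := by
  by_cases hnil : u = []
  · exact ⟨segment ξ 0 1, by simp [IsCFR, hnil], factorAt_segment ξ 0 1⟩
  have hrec := exists_pos_factorAt hΞ hmin ⟨ξ, hξ, 0, hu⟩ hξ
  obtain ⟨hk, hkfac⟩ := Nat.find_spec hrec
  exact ⟨_, isCFR_segment_of_first_return hnil hu hk hkfac
    fun j hj hjk hfac => Nat.find_min hrec hjk ⟨hj, hfac⟩, factorAt_segment ξ 0 _⟩

lemma exists_longest_privileged_prefix (w : List α) :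
    ∃ u, IsPrivileged u ∧ u <+: w ∧
      ∀ p, IsPrivileged p → p <+: w → p.length ≤ u.length := by
  obtain ⟨u, hu, hmax⟩ := Finset.exists_max_image (w.inits.toFinset.filter IsPrivileged)
    List.length ⟨[], by simpa using isPrivileged_nil⟩
  simp only [Finset.mem_filter, List.mem_toFinset, List.mem_inits] at hu hmax
  exact ⟨u, hu.2, hu.1, fun p hp hpw => hmax p ⟨hpw, hp⟩⟩

/-- The complete first return to `u` read off `τ (w ++ [a])` is privileged, so by the
maximality of `u` it is longer than `w`. -/
lemma exists_cfr_extending [TopologicalSpace α] [DiscreteTopology α]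
    {Ξ : Set (ℕ → α)} (hΞ : IsSubshift Ξ) (hmin : IsMinimal Ξ) {τ : List α → ℕ → α}
    (hτ : IsChoiceFun Ξ τ) {w : List α} {a : α} (hv : w ++ [a] ∈ language Ξ) {u : List α}
    (hpriv : IsPrivileged u) (huw : u <+: w)
    (hmax : ∀ p, IsPrivileged p → p <+: w → p.length ≤ u.length) :
    ∃ u', CFRin (language Ξ) u u' ∧ w ++ [a] <+: u' ∧ τ u' = τ (w ++ [a]) := by
  obtain ⟨hξ, hvξ⟩ := hτ.1 _ hv
  have hwξ := hvξ.of_prefix (List.prefix_append w [a])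
  obtain ⟨u', hcfr, hu'ξ⟩ :=
    exists_isCFR_prefixOfInf hΞ hmin hξ (hwξ.of_prefix huw)
  have hu'L : u' ∈ language Ξ := ⟨_, hξ, 0, hu'ξ⟩
  have hlen : (w ++ [a]).length ≤ u'.length := by
    by_contra hlt
    have hu'w : u' <+: w := hu'ξ.prefix_of_length_le hwξ (by simp at hlt; omega)
    have := hmax u' (hpriv.of_isCFR hcfr) hu'w
    have := hcfr.length_lt
    omega
  have hvu' := hvξ.prefix_of_length_le hu'ξ hlen
  exact ⟨u', ⟨hu'L, hcfr⟩, hvu', hτ.eq_of_prefixOfInf hv hu'L hvu' hu'ξ⟩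

lemma exists_tildeH1_of_h1 [TopologicalSpace α] [DiscreteTopology α]
    {Ξ : Set (ℕ → α)} (hΞ : IsSubshift Ξ) (hmin : IsMinimal Ξ) {τ : List α → ℕ → α}
    (hτ : IsChoiceFun Ξ τ) {v₁ v₂ : List α} (h : H1 (language Ξ) v₁ v₂) :
    ∃ u₁ u₂, TildeH1 (language Ξ) u₁ u₂ ∧ τ u₁ = τ v₁ ∧ τ u₂ = τ v₂ := by
  obtain ⟨hv₁, hv₂, hne, w, a, b, rfl, rfl⟩ := h
  obtain ⟨u, hpriv, huw, hmax⟩ := exists_longest_privileged_prefix w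
  obtain ⟨u₁, hcfr₁, hpre₁, hτ₁⟩ := exists_cfr_extending hΞ hmin hτ hv₁ hpriv huw hmax
  obtain ⟨u₂, hcfr₂, hpre₂, hτ₂⟩ := exists_cfr_extending hΞ hmin hτ hv₂ hpriv huw hmax
  refine ⟨u₁, u₂, ⟨?_, u, hpriv, hcfr₁, hcfr₂⟩, hτ₁, hτ₂⟩
  rintro rfl
  exact hne ((List.prefix_of_prefix_length_le hpre₁ hpre₂ (by simp)).eq_of_length (by simp))

lemma choiceFun_cfr_eq_of_rightSpecial {Ξ : Set (ℕ → α)}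
    (hbal : RSBalanced (language Ξ)) {τ : List α → ℕ → α} (hτ : IsChoiceFun Ξ τ)
    {u u' c : List α} {a : α} (hpriv : IsPrivileged u) (hcfr : CFRin (language Ξ) u u')
    (hrs : RightSpecial (language Ξ) c) (huc : u <+: c) (hca : c ++ [a] <+: u') :
    τ u' = τ (c ++ [a]) := by
  have hvL := mem_language_of_prefix hca hcfr.1
  have hcu' : PPrefix c u' :=
    ⟨(List.prefix_append c [a]).trans hca, by rintro rfl; simpa using hca.length_le⟩
  obtain ⟨hξ, hvξ⟩ := hτ.1 _ hvL
  have huL := mem_language_of_prefix hcfr.2.prefix hcfr.1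
  have hu'ξ := prefixOfInf_of_forall_not_rightSpecial hξ hca hcfr.1 hvξ
    fun p hp hvp hpu' => by
      have hpc := (hbal u hpriv huL u' hcfr).unique ⟨hp, huc.trans
        ((List.prefix_append c [a]).trans hvp), hpu'⟩ ⟨hrs, huc, hcu'⟩
      subst hpc
      simpa using hvp.length_le
  exact hτ.eq_of_prefixOfInf hvL hcfr.1 hca hu'ξ

lemma exists_h1_of_tildeH1 {Ξ : Set (ℕ → α)}
    (hbal : RSBalanced (language Ξ)) {τ : List α → ℕ → α} (hτ : IsChoiceFun Ξ τ)
    {u₁ u₂ : List α} (h : TildeH1 (language Ξ) u₁ u₂) :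
    ∃ v₁ v₂, H1 (language Ξ) v₁ v₂ ∧ τ v₁ = τ u₁ ∧ τ v₂ = τ u₂ := by
  obtain ⟨hne, u, hpriv, hcfr₁, hcfr₂⟩ := h
  obtain ⟨c, a, b, hab, ha, hb⟩ := exists_fork_of_not_prefix
    (hcfr₁.2.not_prefix hcfr₂.2 hne) (hcfr₂.2.not_prefix hcfr₁.2 (Ne.symm hne))
  have haL := mem_language_of_prefix ha hcfr₁.1
  have hbL := mem_language_of_prefix hb hcfr₂.1
  have hrs : RightSpecial (language Ξ) c :=
    ⟨mem_language_of_prefix (List.prefix_append c [a]) haL, a, b, hab, haL, hbL⟩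
  have huc := prefix_of_prefix_fork hab ha hb hcfr₁.2.prefix hcfr₂.2.prefix
  refine ⟨c ++ [a], c ++ [b], ⟨haL, hbL, by simpa using hab, c, a, b, rfl, rfl⟩, ?_, ?_⟩
  · exact (choiceFun_cfr_eq_of_rightSpecial hbal hτ hpriv hcfr₁ hrs huc ha).symm
  · exact (choiceFun_cfr_eq_of_rightSpecial hbal hτ hpriv hcfr₂ hrs huc hb).symm

end

theorem statement11_general {A : Type*} [DecidableEq A] [TopologicalSpace A]
    [DiscreteTopology A] (Ξ : Set (ℕ → A)) (hΞ : IsSubshift Ξ) (hmin : IsMinimal Ξ)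
    (hbal : RSBalanced (language Ξ)) (τ : List A → ℕ → A)
    (hτ : IsChoiceFun Ξ τ) :
    {e : (ℕ → A) × (ℕ → A) | ∃ v₁ v₂, H1 (language Ξ) v₁ v₂ ∧ e = (τ v₁, τ v₂)} =
      {e : (ℕ → A) × (ℕ → A) | ∃ u₁ u₂, TildeH1 (language Ξ) u₁ u₂ ∧ e = (τ u₁, τ u₂)} := by
  ext e
  constructor
  · rintro ⟨v₁, v₂, h, rfl⟩
    obtain ⟨u₁, u₂, h', hτ₁, hτ₂⟩ := exists_tildeH1_of_h1 hΞ hmin hτ h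
    exact ⟨u₁, u₂, h', by rw [hτ₁, hτ₂]⟩
  · rintro ⟨u₁, u₂, h, rfl⟩
    obtain ⟨v₁, v₂, h', hτ₁, hτ₂⟩ := exists_h1_of_tildeH1 hbal hτ h
    exact ⟨v₁, v₂, h', by rw [hτ₁, hτ₂]⟩

/-- If the subshift is right-special balanced then for every choice
function `τ` the approximation graphs `Γ_τ` and `Γ̃_τ` have the same edges. -/
theorem statement11 {A : Type*} [Fintype A] [DecidableEq A] [TopologicalSpace A]
    [DiscreteTopology A] (Ξ : Set (ℕ → A)) (hΞ : IsSubshift Ξ) (hmin : IsMinimal Ξ)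
    (hap : Aperiodic Ξ) (hbal : RSBalanced (language Ξ)) (τ : List A → ℕ → A)
    (hτ : IsChoiceFun Ξ τ) :
    {e : (ℕ → A) × (ℕ → A) | ∃ v₁ v₂, H1 (language Ξ) v₁ v₂ ∧ e = (τ v₁, τ v₂)} =
      {e : (ℕ → A) × (ℕ → A) | ∃ u₁ u₂, TildeH1 (language Ξ) u₁ u₂ ∧ e = (τ u₁, τ u₂)} :=
  statement11_general Ξ hΞ hmin hbal τ hτ

end Arx1111
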